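/- arXiv:2504.01706 — 2 statements merged into one kernel-verified Lean document; each statement's English description precedes it below -/
import Mathlib

section
/- The sequence of real numbers ((2·C_{n+2} − C_{n+1}) / (2·C_{n+3} − 3·C_{n+2}))_{n ∈ ℕ} converges to 7/20 as n → ∞. -/
open Filter

private lemma catalan_pos' (n : ℕ) : 0 < (catalan n : ℝ) := by
  have h := succ_mul_catalan_eq_centralBinom n
  have h2 := n.centralBinom_pos
  have : 0 < catalan n := by
    rcases Nat.eq_zero_or_pos (catalan n) with h0 | h0
    · rw [h0, mul_zero] at h; omega
    · exact h0
  exact_mod_cast this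

private lemma catalan_rec (n : ℕ) :
    ((n : ℝ) + 2) * catalan (n + 1) = 2 * (2 * n + 1) * catalan n := by
  have h1 := succ_mul_catalan_eq_centralBinom (n + 1)
  have h2 := Nat.succ_mul_centralBinom_succ n
  have h3 := succ_mul_catalan_eq_centralBinom n
  have key : (n + 1) * ((n + 2) * catalan (n + 1)) = (n + 1) * (2 * (2 * n + 1) * catalan n) := by
    calc (n + 1) * ((n + 2) * catalan (n + 1)) = (n + 1) * Nat.centralBinom (n + 1) := by
          rw [h1]
      _ = 2 * (2 * n + 1) * Nat.centralBinom n := h2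
      _ = 2 * (2 * n + 1) * ((n + 1) * catalan n) := by rw [h3]
      _ = (n + 1) * (2 * (2 * n + 1) * catalan n) := by ring
  have hnat := Nat.eq_of_mul_eq_mul_left (Nat.succ_pos n) key
  have hc := congrArg (Nat.cast : ℕ → ℝ) hnat
  push_cast at hc
  linarith [hc]

private lemma pointwise (n : ℕ) :
    (2 * (catalan (n + 2) : ℝ) - (catalan (n + 1) : ℝ)) /
      (2 * (catalan (n + 3) : ℝ) - 3 * (catalan (n + 2) : ℝ)) =
    ((7 * (n : ℝ) + 9) * ((n : ℝ) + 4)) / ((2 * (n : ℝ) + 3) * (10 * (n : ℝ) + 16)) := by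
  have h1 := catalan_rec (n + 1)
  have h2 := catalan_rec (n + 2)
  push_cast at h1 h2
  have p1 := catalan_pos' (n + 1)
  have p2 := catalan_pos' (n + 2)
  have hn3 : (n : ℝ) + 3 ≠ 0 := by positivity
  have hn4 : (n : ℝ) + 4 ≠ 0 := by positivity
  have e2 : (catalan (n + 2) : ℝ) = 2 * (2 * n + 3) * catalan (n + 1) / ((n : ℝ) + 3) := by
    rw [eq_div_iff hn3]; linarith [h1]
  have e3 : (catalan (n + 3) : ℝ) = 2 * (2 * n + 5) * catalan (n + 2) / ((n : ℝ) + 4) := by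
    rw [eq_div_iff hn4]; linarith [h2]
  rw [e3, e2]
  have hq : ((2 * (n : ℝ) + 3) * (10 * (n : ℝ) + 16)) ≠ 0 := by positivity
  rw [div_eq_div_iff]
  · field_simp
    ring
  · have hn0 : (0 : ℝ) ≤ n := Nat.cast_nonneg n
    have hn3' : (0 : ℝ) < n + 3 := by positivity
    have hn4' : (0 : ℝ) < n + 4 := by positivity
    have hb : 2 * (2 * (2 * (n : ℝ) + 5) * (2 * (2 * n + 3) * catalan (n + 1) / ((n : ℝ) + 3)) / ((n : ℝ) + 4)) - 3 * (2 * (2 * n + 3) * catalan (n + 1) / ((n : ℝ) + 3)) = (catalan (n + 1) : ℝ) * (2 * (n : ℝ) + 3) * (10 * (n : ℝ) + 16) / (((n : ℝ) + 3) * ((n : ℝ) + 4)) := by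
      field_simp
      ring
    rw [hb]
    positivity
  · exact hq

/-- The proportion `(2·C_{n+2} − C_{n+1}) / (2·C_{n+3} − 3·C_{n+2})` of quasi-hereditary
structures on `kQ(n,1,1)ᵒᵖ` admitting a regular exact Borel subalgebra tends to `7/20`. -/
theorem stmt_6 :
    Filter.Tendsto
      (fun n : ℕ =>
        (2 * (catalan (n + 2) : ℝ) - (catalan (n + 1) : ℝ)) /
          (2 * (catalan (n + 3) : ℝ) - 3 * (catalan (n + 2) : ℝ)))
      Filter.atTop (nhds (7 / 20)) := by
  have heq := pointwise
  rw [funext heq]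
  have hz : ∀ c : ℝ, Tendsto (fun n : ℕ => c / (n : ℝ)) atTop (nhds 0) :=
    fun c => tendsto_const_div_atTop_nhds_zero_nat c
  have hnum : Tendsto (fun n : ℕ => (7 + 9 / (n : ℝ)) * (1 + 4 / (n : ℝ))) atTop
      (nhds ((7 + 0) * (1 + 0))) :=
    (tendsto_const_nhds.add (hz 9)).mul (tendsto_const_nhds.add (hz 4))
  have hden : Tendsto (fun n : ℕ => (2 + 3 / (n : ℝ)) * (10 + 16 / (n : ℝ))) atTop
      (nhds ((2 + 0) * (10 + 0))) :=
    (tendsto_const_nhds.add (hz 3)).mul (tendsto_const_nhds.add (hz 16))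
  have key : Tendsto (fun n : ℕ =>
      ((7 + 9 / (n : ℝ)) * (1 + 4 / (n : ℝ))) /
        ((2 + 3 / (n : ℝ)) * (10 + 16 / (n : ℝ)))) atTop (nhds (7 / 20)) := by
    have h := hnum.div hden (by norm_num)
    norm_num at h
    convert h using 2 <;> norm_num
  refine key.congr' ?_
  filter_upwards [eventually_ge_atTop 1] with n hn
  have hn0 : (n : ℝ) ≠ 0 := by
    have : (1 : ℝ) ≤ (n : ℝ) := by exact_mod_cast hn
    linarith
  field_simp
end

section
/- Let n_a, n_b, n_c ≥ 0 and let ≤ be a linear order on the vertex set of Q(n_a, n_b, n_c). Then Conditions (1) and (2) both hold for (Q(n_a, n_b, n_c), ≤) if and only if at least one of the following holds: (i) there exists k with 1 ≤ k ≤ n_b + 1 such that a_0 > b_i for all 1 ≤ i ≤ k−1 and, in case k ≤ n_b, b_k > a_j for every 0 ≤ j ≤ n_a; or (ii) there exists k with 1 ≤ k ≤ n_c + 1 such that a_0 > c_i for all 1 ≤ i ≤ k−1 and, in case k ≤ n_c, c_k > a_j for every 0 ≤ j ≤ n_a. -/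
/-- The vertex set of the quiver `Q(n_a, n_b, n_c)`: vertices `a 0, …, a n_a`,
`b 0, …, b (n_b - 1)` (representing `b_1, …, b_{n_b}`) and
`c 0, …, c (n_c - 1)` (representing `c_1, …, c_{n_c}`). -/
inductive QV (na nb nc : ℕ) : Type where
  | a : Fin (na + 1) → QV na nb nc
  | b : Fin nb → QV na nb nc
  | c : Fin nc → QV na nb nc

/-- The arrow relation of `Q(n_a, n_b, n_c)`: arrows `a_i → a_{i-1}`, `a_0 → b_1`,
`b_i → b_{i+1}`, `a_0 → c_1`, `c_i → c_{i+1}`. -/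
def qrel {na nb nc : ℕ} : QV na nb nc → QV na nb nc → Prop
  | .a i, .a j => (i : ℕ) = (j : ℕ) + 1
  | .a i, .b j => (i : ℕ) = 0 ∧ (j : ℕ) = 0
  | .a i, .c j => (i : ℕ) = 0 ∧ (j : ℕ) = 0
  | .b i, .b j => (j : ℕ) = (i : ℕ) + 1
  | .c i, .c j => (j : ℕ) = (i : ℕ) + 1
  | _, _ => False

/-- The quiver `Q(n_a, n_b, n_c)`. -/
instance {na nb nc : ℕ} : Quiver (QV na nb nc) :=
  ⟨fun u v => PLift (qrel u v)⟩

open Quiver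

/-- The path `p` passes through the vertex `k`. -/
def PassesThrough {V : Type*} [Quiver V] {a b : V} (p : Path a b) (k : V) : Prop :=
  ∃ (v : Path a k) (u : Path k b), v.comp u = p

/-- `k` is an inner vertex of `p`. -/
def IsInnerVertex {V : Type*} [Quiver V] {a b : V} (p : Path a b) (k : V) : Prop :=
  ∃ (v : Path a k) (u : Path k b), v.length ≠ 0 ∧ u.length ≠ 0 ∧ v.comp u = p

/-- A nontrivial path `p : i → j` is right-minimal directed if `i < j` and every inner
vertex `k` of `p` satisfies `k ≤ i`. -/
def IsRMD {V : Type*} [Quiver V] [LinearOrder V] {i j : V} (p : Path i j) : Prop :=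
  p.length ≠ 0 ∧ i < j ∧ ∀ k, IsInnerVertex p k → k ≤ i

/-- Condition (1): for all paths `p : i → k` and `q : j → k` with `i < k < j` such that
every vertex passed through by `p` is `≤ k`, there is a path `r : j → i` with `q = p ∘ r`. -/
def Cond1 (V : Type*) [Quiver V] [LinearOrder V] : Prop :=
  ∀ (i k j : V) (p : Path i k) (q : Path j k),
    i < k → k < j → (∀ m, PassesThrough p m → m ≤ k) →
    ∃ r : Path j i, r.comp p = q

/-- Condition (2): for every path `q : j → i` with `i < j`, there is at most one
right-minimal directed path `p` with source `i` and target `< j`. -/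
def Cond2 (V : Type*) [Quiver V] [LinearOrder V] : Prop :=
  ∀ i j : V, i < j → Nonempty (Path j i) →
    ∀ (k k' : V) (p : Path i k) (p' : Path i k'),
      IsRMD p → IsRMD p' → k < j → k' < j → k = k' ∧ HEq p p'

/-!
`Q(n_a, n_b, n_c)` is an arborescence rooted at `a_{n_a}`: paths are unique and the vertices
from which a given vertex is reachable form a chain. This alone gives Condition (1) for every
order, and it shows that two right-minimal directed paths out of the same vertex `i` coincide
unless their targets lie on different arms. So Condition (2) fails exactly when some `a_l` has
right-minimal directed paths to some `b_t` and some `c_{t'}` that both lie below a vertex `a_s`.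
Condition (i) says that the `b`-arm stays below `a_0` until it jumps above the whole `a`-arm,
which rules out such a `b_t`; likewise (ii) for `c`. If both fail, the first `b_t` and the first
`c_{t'}` above `a_0` form such a pair, with `l = 0` and `a_s` the largest vertex of the `a`-arm.
-/

open Quiver

section Arborescence

variable {V : Type*} [Quiver V] [Arborescence V]

instance Quiver.Arborescence.subsingleton_path (u v : V) : Subsingleton (Path u v) :=
  ⟨fun _ _ =>
    Path.comp_injective_right (default : Path (Quiver.root V) u) (Subsingleton.elim _ _)⟩

theorem Quiver.Arborescence.reachable_or_reachable {i j k : V} (p : Path i k) (q : Path j k) :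
    Reachable i j ∨ Reachable j i := by
  induction q generalizing i with
  | nil => exact .inl p.reachable
  | cons q e ih =>
    cases p with
    | nil => exact .inr (q.cons e).reachable
    | cons p f =>
      obtain rfl := Path.obj_eq_of_cons_eq_cons (Subsingleton.elim
        ((default : Path (Quiver.root V) _).cons f) ((default : Path (Quiver.root V) _).cons e))
      exact ih p

theorem passesThrough_iff {a b : V} (p : Path a b) (m : V) :
    PassesThrough p m ↔ Reachable a m ∧ Reachable m b :=
  ⟨fun ⟨v, u, _⟩ => ⟨v.reachable, u.reachable⟩,
    fun ⟨⟨v⟩, ⟨u⟩⟩ => ⟨v, u, Subsingleton.elim _ _⟩⟩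

theorem isInnerVertex_iff {a b : V} (p : Path a b) (m : V) :
    IsInnerVertex p m ↔ Reachable a m ∧ Reachable m b ∧ m ≠ a ∧ m ≠ b := by
  constructor
  · rintro ⟨v, u, hv, hu, -⟩
    refine ⟨v.reachable, u.reachable, ?_, ?_⟩
    · rintro rfl
      exact hv (by rw [Subsingleton.elim v .nil]; rfl)
    · rintro rfl
      exact hu (by rw [Subsingleton.elim u .nil]; rfl)
  · rintro ⟨⟨v⟩, ⟨u⟩, hma, hmb⟩
    exact ⟨v, u, fun h => hma (v.eq_of_length_zero h).symm, fun h => hmb (u.eq_of_length_zero h),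
      Subsingleton.elim _ _⟩

variable [LinearOrder V]

theorem Quiver.Arborescence.cond1 : Cond1 V := by
  intro i k j p q _ hkj hp
  rcases Arborescence.reachable_or_reachable p q with hij | hji
  · exact absurd (hp j ((passesThrough_iff p j).2 ⟨hij, q.reachable⟩)) hkj.not_ge
  · exact hji.elim fun r => ⟨r, Subsingleton.elim _ _⟩

theorem isRMD_iff {i j : V} (p : Path i j) :
    IsRMD p ↔
      i < j ∧ ∀ m, Reachable i m → Reachable m j → m ≠ i → m ≠ j → m ≤ i := by
  simp only [IsRMD, isInnerVertex_iff, and_imp]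
  exact ⟨fun h => h.2, fun h => ⟨fun h0 => h.1.ne (p.eq_of_length_zero h0), h⟩⟩

theorem IsRMD.eq_of_reachable {i k k' : V} {p : Path i k} {p' : Path i k'} (hp : IsRMD p)
    (hp' : IsRMD p') (h : Reachable k k') : k = k' := by
  by_contra hne
  exact hp.2.1.not_ge (((isRMD_iff p').1 hp').2 k p.reachable h hp.2.1.ne' hne)

end Arborescence

section StaysBelowUntilAbove

variable {α ι : Type*} [LinearOrder α] {n : ℕ}

/-- `k` is the first index at which `f` leaves the region below `x` (the paper's `k - 1`);
`k = n` means that `f` stays below `x` throughout. -/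
def StaysBelowUntilAbove (f : Fin n → α) (x : α) (g : ι → α) : Prop :=
  ∃ k : Fin (n + 1), (∀ i : Fin n, (i : ℕ) < (k : ℕ) → f i < x) ∧
    ∀ h : (k : ℕ) < n, ∀ j, g j < f ⟨k, h⟩

theorem StaysBelowUntilAbove.lt {f : Fin n → α} {x : α} {g : ι → α}
    (h : StaysBelowUntilAbove f x g) {l : ι} {t : Fin n} (hx : x ≤ g l) (hlt : g l < f t)
    (hbelow : ∀ r < t, f r < g l) (j : ι) : g j < f t := by
  obtain ⟨k, hk, hk'⟩ := h
  rcases lt_trichotomy (k : ℕ) t with hkt | hkt | hkt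
  · exact absurd (hk' (hkt.trans t.isLt) l) (hbelow _ hkt).not_gt
  · convert hk' (hkt ▸ t.isLt) j using 2
    exact (Fin.ext hkt).symm
  · exact absurd ((hk t hkt).trans_le hx) hlt.not_gt

theorem exists_of_not_staysBelowUntilAbove {f : Fin n → α} {x : α} {g : ι → α}
    (h : ¬ StaysBelowUntilAbove f x g) :
    ∃ t, x ≤ f t ∧ (∀ r < t, f r < x) ∧ ∃ j, f t ≤ g j := by
  by_cases hall : ∀ i, f i < x
  · exact absurd ⟨Fin.last n, fun i _ => hall i, fun hn => absurd hn (lt_irrefl n)⟩ h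
  push Not at hall
  obtain ⟨t, ht, hmin⟩ := wellFounded_lt.has_min {t | x ≤ f t} hall
  have hbelow : ∀ r < t, f r < x := fun r hr => lt_of_not_ge fun hr' => hmin r hr' hr
  refine ⟨t, ht, hbelow, ?_⟩
  by_contra hj
  push Not at hj
  exact h ⟨t.castSucc, fun r hr => hbelow r hr, fun _ j => hj j⟩

end StaysBelowUntilAbove

namespace QV

variable {na nb nc : ℕ}

def height : QV na nb nc → ℕ
  | .a i => na - i
  | .b i => na + 1 + i
  | .c i => na + 1 + i

def Reaches : QV na nb nc → QV na nb nc → Prop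
  | .a i, .a j => (j : ℕ) ≤ i
  | .a _, _ => True
  | .b i, .b j => (i : ℕ) ≤ j
  | .c i, .c j => (i : ℕ) ≤ j
  | _, _ => False

theorem height_lt_of_qrel {u v : QV na nb nc} (h : qrel u v) : height u < height v := by
  cases u <;> cases v <;> simp only [qrel, height] at h ⊢ <;> omega

theorem eq_of_qrel_of_qrel {u v w : QV na nb nc} (hu : qrel u w) (hv : qrel v w) : u = v := by
  cases u <;> cases v <;> cases w <;> simp only [qrel] at hu hv <;>
    first | (exfalso; omega) | (congr 1; ext; omega)

theorem Reaches.refl (u : QV na nb nc) : u.Reaches u := by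
  cases u <;> simp [Reaches]

theorem Reaches.trans {u v w : QV na nb nc} (huv : u.Reaches v) (hvw : v.Reaches w) :
    u.Reaches w := by
  cases u <;> cases v <;> cases w <;> simp only [Reaches] at * <;> omega

theorem reaches_of_qrel {u v : QV na nb nc} (h : qrel u v) : u.Reaches v := by
  cases u <;> cases v <;> simp only [qrel, Reaches] at * <;> omega

theorem reaches_of_path {u v : QV na nb nc} (p : Path u v) : u.Reaches v := by
  induction p with
  | nil => exact .refl u
  | cons _ e ih => exact ih.trans (reaches_of_qrel e.down)

theorem exists_qrel_of_reaches {u v : QV na nb nc} (h : u.Reaches v) (hne : u ≠ v) :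
    ∃ w, qrel w v ∧ u.Reaches w := by
  cases u <;> cases v <;>
    simp only [Reaches, ne_eq, a.injEq, b.injEq, c.injEq, Fin.ext_iff] at h hne
  case a.a i j => exact ⟨a ⟨j + 1, by omega⟩, rfl, show (j : ℕ) + 1 ≤ i by omega⟩
  case a.b i j =>
    rcases Nat.eq_zero_or_pos j with hj | hj
    · exact ⟨a 0, by simp [qrel, hj], Nat.zero_le _⟩
    · exact ⟨b ⟨j - 1, by omega⟩, by simp only [qrel]; omega, trivial⟩
  case a.c i j =>
    rcases Nat.eq_zero_or_pos j with hj | hj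
    · exact ⟨a 0, by simp [qrel, hj], Nat.zero_le _⟩
    · exact ⟨c ⟨j - 1, by omega⟩, by simp only [qrel]; omega, trivial⟩
  case b.b i j =>
    exact ⟨b ⟨j - 1, by omega⟩, by simp only [qrel]; omega, by simp only [Reaches]; omega⟩
  case c.c i j =>
    exact ⟨c ⟨j - 1, by omega⟩, by simp only [qrel]; omega, by simp only [Reaches]; omega⟩

theorem reaches_root (v : QV na nb nc) : (a (Fin.last na)).Reaches v := by
  cases v <;> simp [Reaches]; omega

noncomputable instance : Arborescence (QV na nb nc) :=
  arborescenceMk (a (Fin.last na)) height (fun _ _ e => height_lt_of_qrel e.down)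
    (fun _ _ _ e f => by
      obtain rfl := eq_of_qrel_of_qrel e.down f.down
      exact ⟨rfl, heq_of_eq (show PLift.up e.down = PLift.up f.down from rfl)⟩)
    (fun v => (eq_or_ne (a (Fin.last na)) v).imp Eq.symm fun hne =>
      (exists_qrel_of_reaches (reaches_root v) hne).imp fun _ h => ⟨⟨h.1⟩⟩)

theorem reachable_of_reaches {u v : QV na nb nc} (h : u.Reaches v) : Reachable u v := by
  obtain rfl | hne := eq_or_ne u v
  · exact .rfl
  obtain ⟨w, hwv, huw⟩ := exists_qrel_of_reaches h hne
  exact (reachable_of_reaches huw).trans (Hom.reachable (⟨hwv⟩ : w ⟶ v))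
termination_by height v
decreasing_by exact height_lt_of_qrel hwv

theorem reachable_iff_reaches {u v : QV na nb nc} : Reachable u v ↔ u.Reaches v :=
  ⟨fun ⟨p⟩ => reaches_of_path p, reachable_of_reaches⟩

theorem reachable_or_reachable_or_fork {i k k' : QV na nb nc} (hk : Reachable i k)
    (hk' : Reachable i k') :
    Reachable k k' ∨ Reachable k' k ∨
      ∃ l t t', i = a l ∧ (k = b t ∧ k' = c t' ∨ k = c t' ∧ k' = b t) := by
  simp only [reachable_iff_reaches] at *
  cases i <;> cases k <;> cases k' <;> simp only [Reaches] at * <;>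
    first
    | omega
    | tauto
    | exact .inr (.inr ⟨_, _, _, rfl, .inl ⟨rfl, rfl⟩⟩)
    | exact .inr (.inr ⟨_, _, _, rfl, .inr ⟨rfl, rfl⟩⟩)

theorem exists_eq_a_of_reachable {j : QV na nb nc} {l : Fin (na + 1)} (h : Reachable j (a l)) :
    ∃ s, j = a s := by
  rw [reachable_iff_reaches] at h
  cases j <;> simp_all [Reaches]

variable [LinearOrder (QV na nb nc)]

theorem isRMD_a_b_iff {l : Fin (na + 1)} {t : Fin nb} (p : Path (a l : QV na nb nc) (b t)) :
    IsRMD p ↔ (a l : QV na nb nc) < b t ∧ (∀ r < l, (a r : QV na nb nc) < a l) ∧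
      ∀ r < t, (b r : QV na nb nc) < a l := by
  simp only [isRMD_iff, reachable_iff_reaches]
  refine and_congr_right fun _ => ⟨fun h => ⟨fun r hr => ?_, fun r hr => ?_⟩, ?_⟩
  · have hne : (a r : QV na nb nc) ≠ a l := fun h => hr.ne (a.inj h)
    exact (h (a r) hr.le trivial hne (by simp)).lt_of_ne hne
  · have hne : (b r : QV na nb nc) ≠ b t := fun h => hr.ne (b.inj h)
    exact (h (b r) trivial hr.le (by simp) hne).lt_of_ne (by simp)
  · rintro ⟨hal, hl'⟩ (r | r | r) hlm hmt hml hmt'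
    all_goals first
      | exact (hal r (lt_of_le_of_ne hlm fun h => hml (congrArg a h))).le
      | exact (hl' r (lt_of_le_of_ne hmt fun h => hmt' (congrArg b h))).le
      | exact hmt.elim

theorem isRMD_a_c_iff {l : Fin (na + 1)} {t : Fin nc} (p : Path (a l : QV na nb nc) (c t)) :
    IsRMD p ↔ (a l : QV na nb nc) < c t ∧ (∀ r < l, (a r : QV na nb nc) < a l) ∧
      ∀ r < t, (c r : QV na nb nc) < a l := by
  simp only [isRMD_iff, reachable_iff_reaches]
  refine and_congr_right fun _ => ⟨fun h => ⟨fun r hr => ?_, fun r hr => ?_⟩, ?_⟩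
  · have hne : (a r : QV na nb nc) ≠ a l := fun h => hr.ne (a.inj h)
    exact (h (a r) hr.le trivial hne (by simp)).lt_of_ne hne
  · have hne : (c r : QV na nb nc) ≠ c t := fun h => hr.ne (c.inj h)
    exact (h (c r) trivial hr.le (by simp) hne).lt_of_ne (by simp)
  · rintro ⟨hal, hl'⟩ (r | r | r) hlm hmt hml hmt'
    all_goals first
      | exact (hal r (lt_of_le_of_ne hlm fun h => hml (congrArg a h))).le
      | exact (hl' r (lt_of_le_of_ne hmt fun h => hmt' (congrArg c h))).le
      | exact hmt.elim

theorem cond2_of_no_fork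
    (h : ∀ (l s : Fin (na + 1)) (t : Fin nb) (t' : Fin nc)
      (p : Path (a l : QV na nb nc) (b t)) (p' : Path (a l : QV na nb nc) (c t')),
      IsRMD p → IsRMD p' → (b t : QV na nb nc) < a s → (c t' : QV na nb nc) < a s → False) :
    Cond2 (QV na nb nc) := by
  intro i j _ hji k k' p p' hp hp' hkj hk'j
  suffices k = k' by
    subst this
    exact ⟨rfl, heq_of_eq (Subsingleton.elim p p')⟩
  rcases reachable_or_reachable_or_fork p.reachable p'.reachable with
    h' | h' | ⟨l, t, t', rfl, ⟨rfl, rfl⟩ | ⟨rfl, rfl⟩⟩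
  · exact hp.eq_of_reachable hp' h'
  · exact (hp'.eq_of_reachable hp h').symm
  · obtain ⟨s, rfl⟩ := exists_eq_a_of_reachable hji
    exact (h l s t t' p p' hp hp' hkj hk'j).elim
  · obtain ⟨s, rfl⟩ := exists_eq_a_of_reachable hji
    exact (h l s t t' p' p hp' hp hk'j hkj).elim

theorem no_fork_of_staysBelowUntilAbove
    (h : StaysBelowUntilAbove b (a 0 : QV na nb nc) a ∨
      StaysBelowUntilAbove c (a 0 : QV na nb nc) a)
    {l s : Fin (na + 1)} {t : Fin nb} {t' : Fin nc} {p : Path (a l : QV na nb nc) (b t)}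
    {p' : Path (a l : QV na nb nc) (c t')} (hp : IsRMD p) (hp' : IsRMD p')
    (hbs : (b t : QV na nb nc) < a s) (hcs : (c t' : QV na nb nc) < a s) : False := by
  obtain ⟨hbt, hal, hbl⟩ := (isRMD_a_b_iff p).1 hp
  obtain ⟨hct, -, hcl⟩ := (isRMD_a_c_iff p').1 hp'
  have h0 : (a 0 : QV na nb nc) ≤ a l := by
    obtain rfl | hl := eq_or_ne l 0
    · exact le_rfl
    · exact (hal 0 ((Fin.pos_iff_ne_zero' l).2 hl)).le
  rcases h with hB | hC
  · exact (hB.lt h0 hbt hbl s).not_gt hbs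
  · exact (hC.lt h0 hct hcl s).not_gt hcs

theorem staysBelowUntilAbove_of_cond2 (h : Cond2 (QV na nb nc)) :
    StaysBelowUntilAbove b (a 0 : QV na nb nc) a ∨
      StaysBelowUntilAbove c (a 0 : QV na nb nc) a := by
  by_contra hne
  rw [not_or] at hne
  obtain ⟨t, hbt, hbl, jb, hjb⟩ := exists_of_not_staysBelowUntilAbove hne.1
  obtain ⟨t', hct, hcl, jc, hjc⟩ := exists_of_not_staysBelowUntilAbove hne.2
  obtain ⟨s, hs⟩ := Finite.exists_max fun r => (a r : QV na nb nc)
  replace hbt : a 0 < b t := hbt.lt_of_ne (by simp)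
  replace hct : a 0 < c t' := hct.lt_of_ne (by simp)
  have hbs : b t < a s := (hjb.lt_of_ne (by simp)).trans_le (hs jb)
  have hcs : c t' < a s := (hjc.lt_of_ne (by simp)).trans_le (hs jc)
  obtain ⟨p⟩ := reachable_of_reaches (u := a 0) (v := b t) trivial
  obtain ⟨p'⟩ := reachable_of_reaches (u := a 0) (v := c t') trivial
  have hp : IsRMD p := (isRMD_a_b_iff p).2 ⟨hbt, fun r hr => absurd hr (Fin.not_lt_zero r), hbl⟩
  have hp' : IsRMD p' :=
    (isRMD_a_c_iff p').2 ⟨hct, fun r hr => absurd hr (Fin.not_lt_zero r), hcl⟩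
  have := h (a 0) (a s) (hbt.trans hbs) (reachable_of_reaches (Nat.zero_le _)) _ _ p p' hp hp'
    hbs hcs
  exact absurd this.1 (by simp)

end QV

/-- Conditions (1) and (2) hold for `Q(n_a, n_b, n_c)` with a linear order `≤` on its
vertices if and only if there is `1 ≤ k ≤ n_b + 1` with `a_0 > b_i` for `1 ≤ i ≤ k - 1`
and (if `k ≤ n_b`) `b_k > a_j` for all `j`, or the analogous condition on the `c`-arm.
(Here `k : Fin (nb + 1)` represents the paper's `k - 1`.) -/
theorem stmt_9 (na nb nc : ℕ) [LinearOrder (QV na nb nc)] :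
    (Cond1 (QV na nb nc) ∧ Cond2 (QV na nb nc)) ↔
      ((∃ k : Fin (nb + 1),
          (∀ i : Fin nb, (i : ℕ) < (k : ℕ) →
            (QV.b i : QV na nb nc) < (QV.a 0 : QV na nb nc)) ∧
          ∀ h : (k : ℕ) < nb, ∀ j : Fin (na + 1),
            (QV.a j : QV na nb nc) < (QV.b ⟨(k : ℕ), h⟩ : QV na nb nc)) ∨
       (∃ k : Fin (nc + 1),
          (∀ i : Fin nc, (i : ℕ) < (k : ℕ) →
            (QV.c i : QV na nb nc) < (QV.a 0 : QV na nb nc)) ∧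
          ∀ h : (k : ℕ) < nc, ∀ j : Fin (na + 1),
            (QV.a j : QV na nb nc) < (QV.c ⟨(k : ℕ), h⟩ : QV na nb nc))) :=
  ⟨fun h => QV.staysBelowUntilAbove_of_cond2 h.2,
    fun h => ⟨Arborescence.cond1,
      QV.cond2_of_no_fork fun _ _ _ _ _ _ => QV.no_fork_of_staysBelowUntilAbove h⟩⟩
end
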